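/- arXiv:1910.04295 — 3 statements merged into one kernel-verified Lean document; each statement's English description precedes it below -/
import Mathlib

section
/- If ‖T^y_K‖·‖F^y_K - F^y_{K'}‖ ≤ η < 1, then for any positive semidefinite matrix X: ‖(T^y_K - T^y_{K'})(X)‖ ≤ (1/(1-η))‖T^y_K‖·‖F^y_K - F^y_{K'}‖·‖T^y_K(X)‖ ≤ (η/(1-η))‖T^y_K(X)‖. -/
/-!
The Lyapunov operator `F_K X = γ L X Lᵀ`, `L = A - BK`, has operator norm at most `γ‖L‖² < 1`, so
`T_K` is its Neumann series, i.e. the inverse of the unit `1 - F_K` of the Banach algebra of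
operators on matrices. For two units the resolvent identity gives
`T_K - T_{K'} = T_{K'} (F_K - F_{K'}) T_K`, and the same identity yields
`‖T_{K'}‖ ≤ ‖T_K‖ + η ‖T_{K'}‖`, i.e. `‖T_{K'}‖ ≤ ‖T_K‖ / (1 - η)`.
-/

open scoped Matrix.Norms.L2Operator
open Matrix

/-- Operator norm of a map on `d×d` matrices induced by the spectral norm. -/
noncomputable def opN {d : ℕ}
    (f : Matrix (Fin d) (Fin d) ℝ → Matrix (Fin d) (Fin d) ℝ) : ℝ :=
  ⨆ X : {X : Matrix (Fin d) (Fin d) ℝ // ‖X‖ ≤ 1}, ‖f X.1‖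

theorem Units.val_inv_sub_val_inv {R : Type*} [Ring R] (u v : Rˣ) :
    (↑u⁻¹ : R) - ↑v⁻¹ = ↑v⁻¹ * (↑v - ↑u) * ↑u⁻¹ := by
  simp [mul_sub, sub_mul, mul_assoc]

theorem Units.norm_inv_le_of_norm_inv_mul_norm_sub_le {R : Type*} [NormedRing R] (u v : Rˣ)
    {η : ℝ} (hη1 : η < 1) (hη : ‖(↑u⁻¹ : R)‖ * ‖(v - u : R)‖ ≤ η) :
    ‖(↑v⁻¹ : R)‖ ≤ ‖(↑u⁻¹ : R)‖ / (1 - η) := by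
  have h : ‖(↑v⁻¹ : R)‖ ≤ ‖(↑u⁻¹ : R)‖ + η * ‖(↑v⁻¹ : R)‖ :=
    calc ‖(↑v⁻¹ : R)‖ = ‖(↑u⁻¹ : R) - ↑v⁻¹ * (↑v - ↑u) * ↑u⁻¹‖ := by
          rw [← Units.val_inv_sub_val_inv, sub_sub_cancel]
      _ ≤ ‖(↑u⁻¹ : R)‖ + ‖(↑v⁻¹ : R)‖ * (‖(↑u⁻¹ : R)‖ * ‖(v - u : R)‖) := by
          refine (norm_sub_le _ _).trans (add_le_add_right ?_ _)
          rw [mul_comm ‖(↑u⁻¹ : R)‖, ← mul_assoc]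
          exact norm_mul₃_le
      _ ≤ ‖(↑u⁻¹ : R)‖ + η * ‖(↑v⁻¹ : R)‖ := by
          rw [mul_comm η]
          gcongr
  rw [le_div_iff₀ (sub_pos.2 hη1)]
  linarith

theorem ContinuousLinearMap.norm_inv_apply_sub_inv_apply_le {𝕜 E : Type*}
    [NontriviallyNormedField 𝕜] [NormedAddCommGroup E] [NormedSpace 𝕜 E] (u v : (E →L[𝕜] E)ˣ)
    {η : ℝ} (hη1 : η < 1) (hη : ‖(↑u⁻¹ : E →L[𝕜] E)‖ * ‖(v - u : E →L[𝕜] E)‖ ≤ η) (x : E) :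
    ‖(↑u⁻¹ : E →L[𝕜] E) x - (↑v⁻¹ : E →L[𝕜] E) x‖
      ≤ 1 / (1 - η) * ‖(↑u⁻¹ : E →L[𝕜] E)‖ * ‖(v - u : E →L[𝕜] E)‖ * ‖(↑u⁻¹ : E →L[𝕜] E) x‖ :=
  calc ‖(↑u⁻¹ : E →L[𝕜] E) x - (↑v⁻¹ : E →L[𝕜] E) x‖
        = ‖(↑v⁻¹ : E →L[𝕜] E) ((v - u : E →L[𝕜] E) ((↑u⁻¹ : E →L[𝕜] E) x))‖ := by
        rw [← _root_.sub_apply, Units.val_inv_sub_val_inv]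
        rfl
    _ ≤ ‖(↑v⁻¹ : E →L[𝕜] E)‖ * (‖(v - u : E →L[𝕜] E)‖ * ‖(↑u⁻¹ : E →L[𝕜] E) x‖) :=
        le_opNorm_of_le _ (le_opNorm _ _)
    _ ≤ ‖(↑u⁻¹ : E →L[𝕜] E)‖ / (1 - η) * (‖(v - u : E →L[𝕜] E)‖ * ‖(↑u⁻¹ : E →L[𝕜] E) x‖) := by
        gcongr
        exact Units.norm_inv_le_of_norm_inv_mul_norm_sub_le u v hη1 hη
    _ = 1 / (1 - η) * ‖(↑u⁻¹ : E →L[𝕜] E)‖ * ‖(v - u : E →L[𝕜] E)‖ * ‖(↑u⁻¹ : E →L[𝕜] E) x‖ := by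
        ring

theorem opN_eq_norm {d : ℕ} (f : Matrix (Fin d) (Fin d) ℝ →L[ℝ] Matrix (Fin d) (Fin d) ℝ) :
    opN f = ‖f‖ := by
  have hball : Metric.closedBall (0 : Matrix (Fin d) (Fin d) ℝ) 1 = {X | ‖X‖ ≤ 1} := by
    ext X; exact mem_closedBall_zero_iff
  rw [← f.sSup_unitClosedBall_eq_norm, hball, sSup_image']
  rfl

section Lyapunov

variable {n : Type*} [Fintype n] [DecidableEq n]

theorem Matrix.l2_opNorm_transpose (L : Matrix n n ℝ) : ‖Lᵀ‖ = ‖L‖ := by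
  rw [← conjTranspose_eq_transpose_of_trivial, l2_opNorm_conjTranspose]

noncomputable def lyapunovOp (γ : ℝ) (L : Matrix n n ℝ) : Matrix n n ℝ →L[ℝ] Matrix n n ℝ :=
  γ • ContinuousLinearMap.mulLeftRight ℝ (Matrix n n ℝ) L Lᵀ

@[simp]
theorem lyapunovOp_apply (γ : ℝ) (L X : Matrix n n ℝ) :
    lyapunovOp γ L X = γ • (L * X * Lᵀ) :=
  rfl

theorem lyapunovOp_pow_apply (γ : ℝ) (L X : Matrix n n ℝ) (t : ℕ) :
    (lyapunovOp γ L ^ t) X = γ ^ t • (L ^ t * X * Lᵀ ^ t) := by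
  induction t with
  | zero => simp
  | succ t ih =>
    rw [pow_succ', mul_apply_eq_comp, ih, lyapunovOp_apply, pow_succ' γ, pow_succ' L,
      pow_succ Lᵀ, mul_smul_comm, smul_mul_assoc, smul_smul]
    simp only [Matrix.mul_assoc]

theorem norm_lyapunovOp_le {γ : ℝ} (hγ : 0 ≤ γ) (L : Matrix n n ℝ) :
    ‖lyapunovOp γ L‖ ≤ γ * ‖L‖ ^ 2 :=
  calc ‖lyapunovOp γ L‖ ≤ γ * (‖L‖ * ‖Lᵀ‖) := by
        refine (norm_smul_le γ (ContinuousLinearMap.mulLeftRight ℝ (Matrix n n ℝ) L Lᵀ)).trans ?_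
        rw [Real.norm_of_nonneg hγ]
        gcongr
        exact ContinuousLinearMap.opNorm_mulLeftRight_apply_apply_le ℝ _ L Lᵀ
    _ = γ * ‖L‖ ^ 2 := by rw [L.l2_opNorm_transpose, sq]

theorem tsum_pow_lyapunovOp_apply {γ : ℝ} {L : Matrix n n ℝ} (h : ‖lyapunovOp γ L‖ < 1)
    (X : Matrix n n ℝ) :
    (∑' t, lyapunovOp γ L ^ t) X = ∑' t, γ ^ t • (L ^ t * X * Lᵀ ^ t) := by
  simp_rw [← lyapunovOp_pow_apply]
  exact ((summable_geometric_of_norm_lt_one (K := Matrix n n ℝ →L[ℝ] Matrix n n ℝ) h).hasSum.mapL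
    (ContinuousLinearMap.apply ℝ _ X)).tsum_eq.symm

end Lyapunov

/-- with `F^y_K(X) = γ(A-BK)X(A-BK)ᵀ` and
`T^y_K(X) = ∑ γ^t (A-BK)^t X ((A-BK)ᵀ)^t`, if
`‖T^y_K‖·‖F^y_K - F^y_{K'}‖ ≤ η < 1` then for every psd matrix `X`,
`‖(T^y_K - T^y_{K'})(X)‖ ≤ (1/(1-η))‖T^y_K‖‖F^y_K - F^y_{K'}‖‖T^y_K(X)‖
  ≤ (η/(1-η))‖T^y_K(X)‖`. -/
theorem stmt_9 {d l : ℕ} (γ : ℝ) (hγ : γ ∈ Set.Ioo (0:ℝ) 1)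
    (A : Matrix (Fin d) (Fin d) ℝ) (B : Matrix (Fin d) (Fin l) ℝ)
    (K K' : Matrix (Fin l) (Fin d) ℝ)
    (hK : γ * ‖A - B * K‖ ^ 2 < 1) (hK' : γ * ‖A - B * K'‖ ^ 2 < 1)
    (TK TK' FK FK' : Matrix (Fin d) (Fin d) ℝ → Matrix (Fin d) (Fin d) ℝ)
    (hFK : ∀ X, FK X = γ • ((A - B * K) * X * (A - B * K)ᵀ))
    (hFK' : ∀ X, FK' X = γ • ((A - B * K') * X * (A - B * K')ᵀ))
    (hTK : ∀ X, TK X =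
      ∑' t : ℕ, γ ^ t • ((A - B * K) ^ t * X * ((A - B * K)ᵀ) ^ t))
    (hTK' : ∀ X, TK' X =
      ∑' t : ℕ, γ ^ t • ((A - B * K') ^ t * X * ((A - B * K')ᵀ) ^ t))
    (η : ℝ) (hη1 : η < 1)
    (hη : opN TK * opN (fun X => FK X - FK' X) ≤ η) :
    ∀ X : Matrix (Fin d) (Fin d) ℝ, X.PosSemidef →
      ‖TK X - TK' X‖
          ≤ (1 / (1 - η)) * opN TK * opN (fun X => FK X - FK' X) * ‖TK X‖
        ∧ (1 / (1 - η)) * opN TK * opN (fun X => FK X - FK' X) * ‖TK X‖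
          ≤ (η / (1 - η)) * ‖TK X‖ := by
  intro X _
  constructor
  · have hF := (norm_lyapunovOp_le hγ.1.le (A - B * K)).trans_lt hK
    have hF' := (norm_lyapunovOp_le hγ.1.le (A - B * K')).trans_lt hK'
    set u := Units.oneSub (R := _ →L[ℝ] _) (lyapunovOp γ (A - B * K)) hF
    set v := Units.oneSub (R := _ →L[ℝ] _) (lyapunovOp γ (A - B * K')) hF'
    have hT : TK = ⇑(↑u⁻¹ : _ →L[ℝ] _) :=
      funext fun X => (hTK X).trans (tsum_pow_lyapunovOp_apply hF X).symm
    have hT' : TK' = ⇑(↑v⁻¹ : _ →L[ℝ] _) :=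
      funext fun X => (hTK' X).trans (tsum_pow_lyapunovOp_apply hF' X).symm
    have hΔ : (fun X => FK X - FK' X) = ⇑(v.val - u.val) := by
      funext X
      simp only [u, v, Units.val_oneSub, sub_sub_sub_cancel_left, _root_.sub_apply,
        lyapunovOp_apply, hFK, hFK']
    subst hT hT'
    rw [hΔ, opN_eq_norm, opN_eq_norm] at hη ⊢
    exact ContinuousLinearMap.norm_inv_apply_sub_inv_apply_le u v hη1 hη X
  · calc 1 / (1 - η) * opN TK * opN (fun X => FK X - FK' X) * ‖TK X‖
        = opN TK * opN (fun X => FK X - FK' X) * ‖TK X‖ / (1 - η) := by ring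
      _ ≤ η * ‖TK X‖ / (1 - η) := by gcongr
      _ = η / (1 - η) * ‖TK X‖ := by ring
end

section
/- The operator T^y_K satisfies the bound ‖T^y_K‖ ≤ C_y(K) / (λ¹_y λ_min(Q)), where λ¹_y = λ_min(Σ_{y_0} + (γ/(1-γ))Σ¹) > 0. -/
/-!
Write `M = A - B K`, `Σ = Σ_{y₀} + (γ / (1 - γ)) Σ¹` and `P = Q + Kᵀ R K`. Since
`‖γᵗ Mᵗ X (Mᵀ)ᵗ‖ ≤ ‖X‖ γᵗ ‖Mᵗ‖²`, every `X` in the unit ball satisfies `‖T_K X‖ ≤ S := ∑ₜ γᵗ ‖Mᵗ‖²`,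
so it suffices to show `λ_min(Σ) λ_min(Q) S ≤ Tr(P T_K Σ)`. This holds term by term: for
`N = Mᵗ` one has `‖N‖² ≤ Tr(N Nᵀ)`, `λ_min(Σ) Tr(N Nᵀ) ≤ Tr(N Σ Nᵀ)` (sum the Rayleigh bound over
the rows of `N`), and `λ_min(Q) Tr(Y) ≤ Tr(P Y)` for the positive semidefinite `Y = N Σ Nᵀ`
(write `Y = Wᵀ W` and apply the previous bound to `W`).
-/

open scoped Matrix.Norms.L2Operator
open Matrix

/-- Minimal eigenvalue of a symmetric matrix, via the Rayleigh quotient. -/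
noncomputable def lamMin {d : ℕ} (A : Matrix (Fin d) (Fin d) ℝ) : ℝ :=
  ⨅ x : {x : Fin d → ℝ // x ≠ 0}, (x.1 ⬝ᵥ A.mulVec x.1) / (x.1 ⬝ᵥ x.1)

namespace Matrix

variable {m n : Type*} [Fintype m] [Fintype n]

theorem trace_mul_mul_transpose {R : Type*} [CommSemiring R] (N : Matrix m n R)
    (P : Matrix n n R) :
    (N * P * Nᵀ).trace = ∑ i, N i ⬝ᵥ P *ᵥ N i := by
  simp only [trace, diag, mul_apply, transpose_apply, dotProduct, mulVec, Finset.sum_mul,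
    Finset.mul_sum]
  refine Finset.sum_congr rfl fun i _ => Finset.sum_comm.trans ?_
  exact Finset.sum_congr rfl fun j _ => Finset.sum_congr rfl fun k _ => by ring

theorem mul_trace_mul_transpose_le [DecidableEq n] {P : Matrix n n ℝ} {c : ℝ}
    (hP : ∀ x, c * (x ⬝ᵥ x) ≤ x ⬝ᵥ P *ᵥ x) (N : Matrix m n ℝ) :
    c * (N * Nᵀ).trace ≤ (N * P * Nᵀ).trace := by
  have h := trace_mul_mul_transpose N 1
  rw [Matrix.mul_one] at h
  simp only [h, trace_mul_mul_transpose, one_mulVec, Finset.mul_sum]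
  exact Finset.sum_le_sum fun i _ => hP (N i)

open scoped MatrixOrder in
theorem mul_trace_le_trace_mul [DecidableEq n] {P Y : Matrix n n ℝ} {c : ℝ}
    (hP : ∀ x, c * (x ⬝ᵥ x) ≤ x ⬝ᵥ P *ᵥ x) (hY : Y.PosSemidef) :
    c * Y.trace ≤ (P * Y).trace := by
  obtain ⟨W, rfl⟩ := CStarAlgebra.nonneg_iff_eq_star_mul_self.mp hY.nonneg
  rw [star_eq_conjTranspose, conjTranspose_eq_transpose_of_trivial, trace_mul_comm Wᵀ W,
    ← Matrix.mul_assoc, trace_mul_comm (P * Wᵀ) W, ← Matrix.mul_assoc]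
  exact mul_trace_mul_transpose_le hP W

theorem l2_opNorm_sq_le_trace_mul_transpose [DecidableEq n] (N : Matrix m n ℝ) :
    ‖N‖ ^ 2 ≤ (N * Nᵀ).trace := by
  have htr : (N * Nᵀ).trace = ∑ i, N i ⬝ᵥ N i := by
    simpa using trace_mul_mul_transpose N 1
  have htr_nonneg : 0 ≤ (N * Nᵀ).trace :=
    htr ▸ Finset.sum_nonneg fun i _ => dotProduct_self_star_nonneg _
  have hbound : ‖N‖ ≤ √(N * Nᵀ).trace := by
    rw [l2_opNorm_def]
    refine ContinuousLinearMap.opNorm_le_bound _ (Real.sqrt_nonneg _) fun x => ?_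
    refine (sq_le_sq₀ (norm_nonneg _) (by positivity)).mp ?_
    rw [mul_pow, Real.sq_sqrt htr_nonneg, EuclideanSpace.norm_sq_eq, EuclideanSpace.norm_sq_eq,
      htr, Finset.sum_mul]
    refine Finset.sum_le_sum fun i _ => ?_
    simpa [mulVec, dotProduct, sq] using Finset.sum_mul_sq_le_sq_mul_sq Finset.univ (N i) x
  calc ‖N‖ ^ 2 ≤ (√(N * Nᵀ).trace) ^ 2 := pow_le_pow_left₀ (norm_nonneg _) hbound 2
    _ = (N * Nᵀ).trace := Real.sq_sqrt htr_nonneg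

open scoped MatrixOrder in
theorem PosDef.exists_pos_mul_dotProduct_le [DecidableEq n] [Nonempty n] {A : Matrix n n ℝ}
    (hA : A.PosDef) :
    ∃ r > 0, ∀ x, r * (x ⬝ᵥ x) ≤ x ⬝ᵥ A *ᵥ x := by
  obtain ⟨r, hr, hrA⟩ := (CFC.exists_pos_algebraMap_le_iff hA.isHermitian).mpr
    fun _ hx => hA.isStrictlyPositive.spectrum_pos hx
  refine ⟨r, hr, fun x => ?_⟩
  have h := (le_iff.mp hrA).dotProduct_mulVec_nonneg x
  rwa [star_trivial, Algebra.algebraMap_eq_smul_one, sub_mulVec, dotProduct_sub, smul_mulVec,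
    one_mulVec, dotProduct_smul, smul_eq_mul, sub_nonneg] at h

end Matrix

section lamMin

variable {d : ℕ} {A : Matrix (Fin d) (Fin d) ℝ}

theorem nonempty_of_lamMin_ne_zero (h : lamMin A ≠ 0) : Nonempty (Fin d) := by
  by_contra hd
  have : IsEmpty {x : Fin d → ℝ // x ≠ 0} :=
    ⟨fun x => x.2 (funext fun i => (hd ⟨i⟩).elim)⟩
  exact h (Real.iInf_of_isEmpty _)

-- `lamMin A` takes the junk value `0` when the Rayleigh quotients are unbounded below.
theorem lamMin_mul_dotProduct_le (h : lamMin A ≠ 0) (x : Fin d → ℝ) :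
    lamMin A * (x ⬝ᵥ x) ≤ x ⬝ᵥ A *ᵥ x := by
  rcases eq_or_ne x 0 with rfl | hx
  · simp
  have hbdd : BddBelow (Set.range fun y : {x : Fin d → ℝ // x ≠ 0} =>
      (y.1 ⬝ᵥ A *ᵥ y.1) / (y.1 ⬝ᵥ y.1)) := by
    by_contra hb
    exact h (Real.iInf_of_not_bddBelow hb)
  have hxx : 0 < x ⬝ᵥ x := by simpa using dotProduct_star_self_pos_iff.mpr hx
  rw [← le_div_iff₀ hxx]
  exact ciInf_le hbdd ⟨x, hx⟩

theorem lamMin_pos (hA : A.PosDef) [Nonempty (Fin d)] : 0 < lamMin A := by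
  obtain ⟨r, hr, hrA⟩ := hA.exists_pos_mul_dotProduct_le
  have : Nonempty {x : Fin d → ℝ // x ≠ 0} := nonempty_subtype.mpr (exists_ne 0)
  refine hr.trans_le (le_ciInf fun x => ?_)
  have hxx : 0 < x.1 ⬝ᵥ x.1 := by simpa using dotProduct_star_self_pos_iff.mpr x.2
  exact (le_div_iff₀ hxx).mpr (hrA x.1)

end lamMin

theorem opN_le {d : ℕ} {f : Matrix (Fin d) (Fin d) ℝ → Matrix (Fin d) (Fin d) ℝ} {b : ℝ}
    (h : ∀ X, ‖X‖ ≤ 1 → ‖f X‖ ≤ b) : opN f ≤ b :=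
  have : Nonempty {X : Matrix (Fin d) (Fin d) ℝ // ‖X‖ ≤ 1} := ⟨⟨0, by simp⟩⟩
  ciSup_le fun X => h X.1 X.2

section DiscountedSeries

variable {n : Type*} [Fintype n] [DecidableEq n] {γ : ℝ} {M : Matrix n n ℝ}

theorem norm_smul_pow_mul_mul_transpose_pow_le (hγ : 0 ≤ γ) (X : Matrix n n ℝ) (t : ℕ) :
    ‖γ ^ t • (M ^ t * X * Mᵀ ^ t)‖ ≤ ‖X‖ * (γ ^ t * ‖M ^ t‖ ^ 2) := by
  have hT : ‖Mᵀ ^ t‖ = ‖M ^ t‖ := by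
    rw [← transpose_pow, ← conjTranspose_eq_transpose_of_trivial, l2_opNorm_conjTranspose]
  rw [norm_smul, Real.norm_of_nonneg (pow_nonneg hγ t)]
  calc γ ^ t * ‖M ^ t * X * Mᵀ ^ t‖ ≤ γ ^ t * (‖M ^ t‖ * ‖X‖ * ‖Mᵀ ^ t‖) := by
        gcongr; exact norm_mul₃_le
    _ = ‖X‖ * (γ ^ t * ‖M ^ t‖ ^ 2) := by rw [hT]; ring

theorem summable_pow_mul_norm_pow_sq [Nonempty n] (hγ : 0 ≤ γ) (hM : γ * ‖M‖ ^ 2 < 1) :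
    Summable fun t => γ ^ t * ‖M ^ t‖ ^ 2 := by
  refine (summable_geometric_of_lt_one (by positivity) hM).of_nonneg_of_le
    (fun t => by positivity) fun t => ?_
  rw [mul_pow, ← pow_mul, mul_comm 2, pow_mul]
  gcongr
  exact norm_pow_le M t

theorem summable_smul_pow_mul_mul_transpose_pow [Nonempty n] (hγ : 0 ≤ γ)
    (hM : γ * ‖M‖ ^ 2 < 1) (X : Matrix n n ℝ) :
    Summable fun t => γ ^ t • (M ^ t * X * Mᵀ ^ t) :=
  .of_norm_bounded ((summable_pow_mul_norm_pow_sq hγ hM).mul_left ‖X‖)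
    (norm_smul_pow_mul_mul_transpose_pow_le hγ X)

theorem norm_tsum_smul_pow_mul_mul_transpose_pow_le [Nonempty n] (hγ : 0 ≤ γ)
    (hM : γ * ‖M‖ ^ 2 < 1) (X : Matrix n n ℝ) :
    ‖∑' t, γ ^ t • (M ^ t * X * Mᵀ ^ t)‖ ≤ ‖X‖ * ∑' t, γ ^ t * ‖M ^ t‖ ^ 2 := by
  rw [← tsum_mul_left]
  exact tsum_of_norm_bounded ((summable_pow_mul_norm_pow_sq hγ hM).mul_left ‖X‖).hasSum
    (norm_smul_pow_mul_mul_transpose_pow_le hγ X)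

theorem hasSum_trace_mul_smul_pow_mul_mul_transpose_pow [Nonempty n] (hγ : 0 ≤ γ)
    (hM : γ * ‖M‖ ^ 2 < 1) (P X : Matrix n n ℝ) :
    HasSum (fun t => γ ^ t * (P * (M ^ t * X * Mᵀ ^ t)).trace)
      (P * ∑' t, γ ^ t • (M ^ t * X * Mᵀ ^ t)).trace := by
  have h := (summable_smul_pow_mul_mul_transpose_pow hγ hM X).hasSum.mapL
    (LinearMap.toContinuousLinearMap ((traceLinearMap n ℝ ℝ).comp (LinearMap.mulLeft ℝ P)))
  simpa [trace_smul] using h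

theorem mul_mul_tsum_le_trace_mul_tsum [Nonempty n] (hγ : 0 ≤ γ) (hM : γ * ‖M‖ ^ 2 < 1)
    {S P : Matrix n n ℝ} {a b : ℝ} (ha : 0 ≤ a) (hb : 0 ≤ b)
    (hS : ∀ x, a * (x ⬝ᵥ x) ≤ x ⬝ᵥ S *ᵥ x) (hS_psd : S.PosSemidef)
    (hP : ∀ x, b * (x ⬝ᵥ x) ≤ x ⬝ᵥ P *ᵥ x) :
    a * b * ∑' t, γ ^ t * ‖M ^ t‖ ^ 2 ≤ (P * ∑' t, γ ^ t • (M ^ t * S * Mᵀ ^ t)).trace := by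
  rw [← tsum_mul_left]
  refine hasSum_le (fun t => ?_) ((summable_pow_mul_norm_pow_sq hγ hM).mul_left _).hasSum
    (hasSum_trace_mul_smul_pow_mul_mul_transpose_pow hγ hM P S)
  have hN : (M ^ t)ᴴ = Mᵀ ^ t := by rw [conjTranspose_eq_transpose_of_trivial, transpose_pow]
  have h_norm := l2_opNorm_sq_le_trace_mul_transpose (M ^ t)
  have h_S := mul_trace_mul_transpose_le hS (M ^ t)
  have h_P := mul_trace_le_trace_mul hP (hS_psd.mul_mul_conjTranspose_same (M ^ t))
  rw [hN] at h_P
  rw [transpose_pow] at h_norm h_S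
  calc a * b * (γ ^ t * ‖M ^ t‖ ^ 2) = γ ^ t * (b * (a * ‖M ^ t‖ ^ 2)) := by ring
    _ ≤ γ ^ t * (P * (M ^ t * S * Mᵀ ^ t)).trace := by
      gcongr
      calc b * (a * ‖M ^ t‖ ^ 2) ≤ b * (a * (M ^ t * Mᵀ ^ t).trace) := by gcongr
        _ ≤ b * (M ^ t * S * Mᵀ ^ t).trace := by gcongr
        _ ≤ _ := h_P

end DiscountedSeries

/-- `‖T^y_K‖ ≤ C_y(K) / (λ¹_y λ_min(Q))` where
`λ¹_y = λ_min(Σ_{y₀} + (γ/(1-γ))Σ¹) > 0`,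
`C_y(K) = Tr((Q+KᵀRK) Σ^y_K)` and `Σ^y_K = T^y_K(Σ_{y₀} + (γ/(1-γ))Σ¹)`. -/
theorem stmt_11 {d l : ℕ} (γ : ℝ) (hγ : γ ∈ Set.Ioo (0:ℝ) 1)
    (A : Matrix (Fin d) (Fin d) ℝ) (B : Matrix (Fin d) (Fin l) ℝ)
    (K : Matrix (Fin l) (Fin d) ℝ)
    (hK : γ * ‖A - B * K‖ ^ 2 < 1)
    (Q : Matrix (Fin d) (Fin d) ℝ) (R : Matrix (Fin l) (Fin l) ℝ)
    (hQ : Q.PosDef) (hR : R.PosSemidef)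
    (Sy0 S1 : Matrix (Fin d) (Fin d) ℝ)
    (hSy0 : Sy0.PosSemidef) (hS1 : S1.PosSemidef)
    (TK : Matrix (Fin d) (Fin d) ℝ → Matrix (Fin d) (Fin d) ℝ)
    (hTK : ∀ X, TK X =
      ∑' t : ℕ, γ ^ t • ((A - B * K) ^ t * X * ((A - B * K)ᵀ) ^ t))
    (hlam : 0 < lamMin (Sy0 + (γ / (1 - γ)) • S1)) :
    opN TK ≤ ((Q + Kᵀ * R * K) * TK (Sy0 + (γ / (1 - γ)) • S1)).trace /
      (lamMin (Sy0 + (γ / (1 - γ)) • S1) * lamMin Q) := by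
  obtain ⟨hγ0, hγ1⟩ := hγ
  have := nonempty_of_lamMin_ne_zero hlam.ne'
  have hQ_pos : 0 < lamMin Q := lamMin_pos hQ
  have hSig : (Sy0 + (γ / (1 - γ)) • S1).PosSemidef :=
    hSy0.add (hS1.smul (div_nonneg hγ0.le (sub_nonneg.mpr hγ1.le)))
  have hP : ∀ x, lamMin Q * (x ⬝ᵥ x) ≤ x ⬝ᵥ (Q + Kᵀ * R * K) *ᵥ x := fun x => by
    have hKRK := (hR.conjTranspose_mul_mul_same K).dotProduct_mulVec_nonneg x
    rw [star_trivial, conjTranspose_eq_transpose_of_trivial] at hKRK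
    rw [add_mulVec, dotProduct_add]
    linarith [lamMin_mul_dotProduct_le hQ_pos.ne' x]
  have key := mul_mul_tsum_le_trace_mul_tsum hγ0.le hK hlam.le hQ_pos.le
    (lamMin_mul_dotProduct_le hlam.ne') hSig hP
  rw [← hTK] at key
  calc opN TK ≤ ∑' t, γ ^ t * ‖(A - B * K) ^ t‖ ^ 2 := opN_le fun X hX => by
        rw [hTK]
        exact (norm_tsum_smul_pow_mul_mul_transpose_pow_le hγ0.le hK X).trans
          (mul_le_of_le_one_left (tsum_nonneg fun t => by positivity) hX)
    _ ≤ _ := by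
      rw [le_div_iff₀ (mul_pos hlam hQ_pos)]
      linarith
end

section
/- Truncation error bound: if θ is admissible and T ≥ 2, then ‖Σ^y_K - Σ^{y,T}_K‖ ≤ (T+1)γ_θ^T C_{0,var}/(1-γ_θ)², where Σ^{y,T}_K = E Σ_{t=0}^{T-1} γᵗ y_t y_tᵀ, γ_θ = max{γ, γ‖A-BK‖²} < 1, and C_{0,var} bounds ‖Σ_{y_0}‖ and ‖Σ¹‖. Consequently, if T ≥ ((1/log(1/γ_θ))(log((1/ε)·C_{0,var}/(1-γ_θ)²)+1))², then ‖Σ^y_K - Σ^{y,T}_K‖ ≤ ε. -/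
open scoped Matrix.Norms.L2Operator
open Matrix Finset Real

/-!
The `t`-th term of the discounted series is `γ^t` times a sum of `t + 1` conjugates
`M^s S (Mᵀ)^s` with `s ≤ t` and `‖S‖ ≤ C`; since `γ^t ‖M‖^(2s) ≤ ρ^t` for `ρ = γ_θ`, its norm is at
most `(t + 1) ρ^t C`. Summing this bound over `t ≥ T` gives `C ρ^T (1 + T(1 - ρ)) / (1 - ρ)^2`,
which is at most `(T + 1) ρ^T C / (1 - ρ)^2`.

For the sample-size statement put `L = log (1/ρ)` and `S = log (C / (ε (1 - ρ)^2))`, so the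
hypothesis reads `S + 1 ≤ √T L`. If `S ≤ 0` it suffices that `ρ^T (1 + T(1 - ρ)) ≤ 1`, which follows
from `ρ ≤ e^(ρ-1)`. If `S > 0` then `T ≥ 1`, and `ρ^T = e^(-TL) ≤ e^(-√T (S + 1))` together with
`1 + T ≤ e^(√T)` gives `ρ^T (1 + T) ≤ e^(-√T S) ≤ e^(-S)`.
-/

theorem norm_pow_mul_mul_transpose_pow_le {n : Type*} [Fintype n] [DecidableEq n]
    (M S : Matrix n n ℝ) (t : ℕ) : ‖M ^ t * S * Mᵀ ^ t‖ ≤ (‖M‖ ^ 2) ^ t * ‖S‖ := by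
  induction t with
  | zero => simp
  | succ t ih =>
    have hMT : ‖Mᵀ‖ = ‖M‖ := by
      rw [← conjTranspose_eq_transpose_of_trivial, l2_opNorm_conjTranspose]
    calc ‖M ^ (t + 1) * S * Mᵀ ^ (t + 1)‖ = ‖M * (M ^ t * S * Mᵀ ^ t) * Mᵀ‖ := by
          rw [pow_succ' M, pow_succ Mᵀ]; noncomm_ring
      _ ≤ ‖M‖ * ‖M ^ t * S * Mᵀ ^ t‖ * ‖M‖ := by
          refine (norm_mul_le _ _).trans ?_
          rw [hMT]
          exact mul_le_mul_of_nonneg_right (norm_mul_le _ _) (norm_nonneg _)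
      _ ≤ ‖M‖ * ((‖M‖ ^ 2) ^ t * ‖S‖) * ‖M‖ := by gcongr
      _ = (‖M‖ ^ 2) ^ (t + 1) * ‖S‖ := by ring

theorem pow_mul_pow_le_pow_of_le {a b ρ : ℝ} (ha : 0 ≤ a) (hb : 0 ≤ b) (haρ : a ≤ ρ)
    (habρ : a * b ≤ ρ) {s t : ℕ} (hst : s ≤ t) : a ^ t * b ^ s ≤ ρ ^ t := by
  obtain ⟨k, rfl⟩ := Nat.exists_eq_add_of_le hst
  calc a ^ (s + k) * b ^ s = (a * b) ^ s * a ^ k := by ring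
    _ ≤ ρ ^ s * ρ ^ k := by have := ha.trans haρ; gcongr
    _ = ρ ^ (s + k) := (pow_add _ _ _).symm

theorem norm_discounted_cov_le {n : Type*} [Fintype n] [DecidableEq n]
    {γ ρ C : ℝ} {M S₀ S₁ : Matrix n n ℝ} (hγ : 0 ≤ γ) (hγρ : γ ≤ ρ) (hMρ : γ * ‖M‖ ^ 2 ≤ ρ)
    (hS₀ : ‖S₀‖ ≤ C) (hS₁ : ‖S₁‖ ≤ C) (t : ℕ) :
    ‖γ ^ t • (M ^ t * S₀ * Mᵀ ^ t + ∑ s ∈ range t, M ^ s * S₁ * Mᵀ ^ s)‖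
      ≤ ((t : ℝ) + 1) * ρ ^ t * C := by
  have hC : 0 ≤ C := (norm_nonneg _).trans hS₀
  have hterm : ∀ {S : Matrix n n ℝ}, ‖S‖ ≤ C → ∀ {s}, s ≤ t →
      γ ^ t * ‖M ^ s * S * Mᵀ ^ s‖ ≤ ρ ^ t * C := fun {S} hS {s} hst =>
    calc γ ^ t * ‖M ^ s * S * Mᵀ ^ s‖ ≤ γ ^ t * ((‖M‖ ^ 2) ^ s * ‖S‖) := by
          gcongr; exact norm_pow_mul_mul_transpose_pow_le M S s
      _ = γ ^ t * (‖M‖ ^ 2) ^ s * ‖S‖ := by ring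
      _ ≤ ρ ^ t * C := by
          have := hγ.trans hγρ
          gcongr
          exact pow_mul_pow_le_pow_of_le hγ (by positivity) hγρ hMρ hst
  rw [norm_smul, Real.norm_of_nonneg (pow_nonneg hγ t)]
  calc γ ^ t * ‖M ^ t * S₀ * Mᵀ ^ t + ∑ s ∈ range t, M ^ s * S₁ * Mᵀ ^ s‖
      ≤ γ ^ t * ‖M ^ t * S₀ * Mᵀ ^ t‖ + ∑ s ∈ range t, γ ^ t * ‖M ^ s * S₁ * Mᵀ ^ s‖ := by
        rw [← mul_sum, ← mul_add]
        gcongr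
        exact (norm_add_le _ _).trans (by gcongr; exact norm_sum_le _ _)
    _ ≤ ρ ^ t * C + ∑ s ∈ range t, ρ ^ t * C :=
        add_le_add (hterm hS₀ le_rfl) (sum_le_sum fun s hs => hterm hS₁ (mem_range.1 hs).le)
    _ = ((t : ℝ) + 1) * ρ ^ t * C := by rw [sum_const, card_range, nsmul_eq_mul]; ring

theorem norm_tsum_sub_sum_range_le {E : Type*} [NormedAddCommGroup E] [CompleteSpace E]
    {f : ℕ → E} {b : ℕ → ℝ} (hb : Summable b) (hfb : ∀ t, ‖f t‖ ≤ b t) (T : ℕ) :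
    ‖∑' t, f t - ∑ t ∈ range T, f t‖ ≤ ∑' i, b (i + T) := by
  have hbT : Summable fun i => b (i + T) := (summable_nat_add_iff T).2 hb
  have hfT : Summable fun i => ‖f (i + T)‖ :=
    hbT.of_nonneg_of_le (fun _ => norm_nonneg _) fun i => hfb (i + T)
  rw [← (Summable.of_norm_bounded hb hfb).sum_add_tsum_nat_add T, add_sub_cancel_left]
  exact (norm_tsum_le_tsum_norm hfT).trans (hfT.tsum_le_tsum (fun i => hfb (i + T)) hbT)

theorem summable_add_one_mul_pow {ρ : ℝ} (hρ0 : 0 ≤ ρ) (hρ1 : ρ < 1) :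
    Summable fun t : ℕ => ((t : ℝ) + 1) * ρ ^ t := by
  have hρ : ‖ρ‖ < 1 := by rwa [Real.norm_of_nonneg hρ0]
  simpa [add_mul] using (hasSum_coe_mul_geometric_of_norm_lt_one hρ).summable.add
    (summable_geometric_of_lt_one hρ0 hρ1)

theorem tsum_add_one_mul_pow_add {ρ : ℝ} (hρ0 : 0 ≤ ρ) (hρ1 : ρ < 1) (T : ℕ) :
    ∑' i : ℕ, ((i : ℝ) + T + 1) * ρ ^ (i + T) = ρ ^ T * (1 + T * (1 - ρ)) / (1 - ρ) ^ 2 := by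
  have hρ : ‖ρ‖ < 1 := by rwa [Real.norm_of_nonneg hρ0]
  have h1ρ : 1 - ρ ≠ 0 := by linarith
  calc ∑' i : ℕ, ((i : ℝ) + T + 1) * ρ ^ (i + T)
      = ∑' i : ℕ, (ρ ^ T * ((i : ℝ) * ρ ^ i) + ρ ^ T * ((T : ℝ) + 1) * ρ ^ i) := by
        congr 1; ext i; rw [pow_add]; ring
    _ = ρ ^ T * (ρ / (1 - ρ) ^ 2) + ρ ^ T * ((T : ℝ) + 1) * (1 - ρ)⁻¹ := by
        rw [((hasSum_coe_mul_geometric_of_norm_lt_one hρ).mul_left _).add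
          ((hasSum_geometric_of_lt_one hρ0 hρ1).mul_left _) |>.tsum_eq]
    _ = ρ ^ T * (1 + T * (1 - ρ)) / (1 - ρ) ^ 2 := by field_simp; ring

theorem norm_tsum_sub_sum_range_discounted_cov_le {n : Type*} [Fintype n] [DecidableEq n]
    {γ ρ C : ℝ} {M S₀ S₁ : Matrix n n ℝ} (hγ : 0 ≤ γ) (hρ : ρ < 1) (hγρ : γ ≤ ρ)
    (hMρ : γ * ‖M‖ ^ 2 ≤ ρ) (hS₀ : ‖S₀‖ ≤ C) (hS₁ : ‖S₁‖ ≤ C) (T : ℕ) :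
    ‖(∑' t : ℕ, γ ^ t • (M ^ t * S₀ * Mᵀ ^ t + ∑ s ∈ range t, M ^ s * S₁ * Mᵀ ^ s))
        - ∑ t ∈ range T, γ ^ t • (M ^ t * S₀ * Mᵀ ^ t + ∑ s ∈ range t, M ^ s * S₁ * Mᵀ ^ s)‖
      ≤ C * (ρ ^ T * (1 + T * (1 - ρ)) / (1 - ρ) ^ 2) := by
  have hρ0 : 0 ≤ ρ := hγ.trans hγρ
  refine (norm_tsum_sub_sum_range_le ((summable_add_one_mul_pow hρ0 hρ).mul_right C)
    (norm_discounted_cov_le hγ hγρ hMρ hS₀ hS₁) T).trans_eq ?_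
  rw [← tsum_add_one_mul_pow_add hρ0 hρ T, ← tsum_mul_left]
  congr 1; ext i; push_cast; ring

theorem pow_mul_one_add_mul_one_sub_le_one {ρ : ℝ} (hρ0 : 0 ≤ ρ) (hρ1 : ρ ≤ 1) (T : ℕ) :
    ρ ^ T * (1 + T * (1 - ρ)) ≤ 1 := by
  have hρexp : ρ ≤ exp (-(1 - ρ)) := by linarith [add_one_le_exp (-(1 - ρ))]
  calc ρ ^ T * (1 + T * (1 - ρ)) ≤ exp (-(1 - ρ)) ^ T * exp (T * (1 - ρ)) := by
        have : 0 ≤ 1 - ρ := by linarith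
        gcongr
        linarith [add_one_le_exp (T * (1 - ρ))]
    _ = 1 := by rw [← exp_nat_mul, ← exp_add]; ring_nf; exact exp_zero

theorem one_add_sq_le_exp {a : ℝ} (ha : 0 ≤ a) : 1 + a ^ 2 ≤ exp a := by
  have h := sum_le_exp_of_nonneg ha 4
  simp only [Finset.sum_range_succ, Finset.sum_range_zero, Nat.factorial] at h
  norm_num at h
  nlinarith [mul_nonneg ha (sq_nonneg (a - 3 / 2))]

theorem pow_mul_one_add_mul_one_sub_le_exp_neg {ρ S : ℝ} (hρ0 : 0 < ρ) (hρ1 : ρ < 1) {T : ℕ}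
    (hT : ((1 / log (1 / ρ)) * (S + 1)) ^ 2 ≤ T) :
    ρ ^ T * (1 + T * (1 - ρ)) ≤ exp (-S) := by
  rcases le_or_gt S 0 with hS | hS
  · exact (pow_mul_one_add_mul_one_sub_le_one hρ0.le hρ1.le T).trans (one_le_exp (by linarith))
  set L := log (1 / ρ) with hLdef
  have hL : 0 < L := log_pos (one_lt_one_div hρ0 hρ1)
  have hρL : ρ = exp (-L) := by rw [hLdef, one_div, log_inv, neg_neg, exp_log hρ0]
  have hSL : S + 1 ≤ √T * L := by
    have h := (le_sqrt (by positivity) (Nat.cast_nonneg T)).2 hT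
    rwa [one_div_mul_eq_div, div_le_iff₀ hL] at h
  have hT1 : 1 ≤ √T := by
    have : (0 : ℝ) < T := lt_of_lt_of_le (by positivity) hT
    exact one_le_sqrt.2 (Nat.one_le_cast.2 (Nat.cast_pos.1 this))
  have hTsq : √T * √T = T := mul_self_sqrt (Nat.cast_nonneg T)
  calc ρ ^ T * (1 + T * (1 - ρ)) ≤ exp (-(√T * (√T * L))) * exp √T := by
        rw [← mul_assoc, hTsq, neg_mul_eq_mul_neg, exp_nat_mul, ← hρL]
        gcongr
        calc 1 + T * (1 - ρ) ≤ 1 + √T ^ 2 := by rw [sq, hTsq]; nlinarith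
          _ ≤ exp √T := one_add_sq_le_exp (sqrt_nonneg _)
    _ ≤ exp (-S) := by
        rw [← exp_add, exp_le_exp]
        nlinarith [mul_le_mul_of_nonneg_left hSL (sqrt_nonneg (T : ℝ))]

theorem mul_pow_mul_div_le_of_sq_le {ρ C ε : ℝ} (hρ0 : 0 < ρ) (hρ1 : ρ < 1) (hC : 0 ≤ C)
    (hε : 0 < ε) {T : ℕ}
    (hT : ((1 / log (1 / ρ)) * (log ((1 / ε) * (C / (1 - ρ) ^ 2)) + 1)) ^ 2 ≤ T) :
    C * (ρ ^ T * (1 + T * (1 - ρ)) / (1 - ρ) ^ 2) ≤ ε := by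
  rcases hC.eq_or_lt with rfl | hC
  · rw [zero_mul]; exact hε.le
  have h1ρ : 0 < 1 - ρ := by linarith
  have h := pow_mul_one_add_mul_one_sub_le_exp_neg hρ0 hρ1 hT
  rw [exp_neg, exp_log (by positivity)] at h
  calc C * (ρ ^ T * (1 + T * (1 - ρ)) / (1 - ρ) ^ 2)
      ≤ C * (((1 / ε) * (C / (1 - ρ) ^ 2))⁻¹ / (1 - ρ) ^ 2) := by gcongr
    _ = ε := by field_simp

theorem stmt_13_general {d l : ℕ} (γ : ℝ) (hγ : γ ∈ Set.Ioo (0:ℝ) 1)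
    (A : Matrix (Fin d) (Fin d) ℝ) (B : Matrix (Fin d) (Fin l) ℝ)
    (K : Matrix (Fin l) (Fin d) ℝ)
    (hK : γ * ‖A - B * K‖ ^ 2 < 1)
    (Sy0 S1 : Matrix (Fin d) (Fin d) ℝ)
    (C0var : ℝ) (hC0 : ‖Sy0‖ ≤ C0var ∧ ‖S1‖ ≤ C0var)
    (T : ℕ)
    (ε : ℝ) (hε : 0 < ε) :
    ‖(∑' t : ℕ, γ ^ t •
          ((A - B * K) ^ t * Sy0 * ((A - B * K)ᵀ) ^ t
            + ∑ s ∈ Finset.range t, (A - B * K) ^ s * S1 * ((A - B * K)ᵀ) ^ s))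
        - ∑ t ∈ Finset.range T, γ ^ t •
          ((A - B * K) ^ t * Sy0 * ((A - B * K)ᵀ) ^ t
            + ∑ s ∈ Finset.range t, (A - B * K) ^ s * S1 * ((A - B * K)ᵀ) ^ s)‖
      ≤ ((T : ℝ) + 1) * max γ (γ * ‖A - B * K‖ ^ 2) ^ T * C0var /
          (1 - max γ (γ * ‖A - B * K‖ ^ 2)) ^ 2
    ∧
    (((1 / Real.log (1 / max γ (γ * ‖A - B * K‖ ^ 2))) *
        (Real.log ((1 / ε) * (C0var / (1 - max γ (γ * ‖A - B * K‖ ^ 2)) ^ 2)) + 1)) ^ 2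
        ≤ (T : ℝ) →
      ‖(∑' t : ℕ, γ ^ t •
            ((A - B * K) ^ t * Sy0 * ((A - B * K)ᵀ) ^ t
              + ∑ s ∈ Finset.range t, (A - B * K) ^ s * S1 * ((A - B * K)ᵀ) ^ s))
          - ∑ t ∈ Finset.range T, γ ^ t •
            ((A - B * K) ^ t * Sy0 * ((A - B * K)ᵀ) ^ t
              + ∑ s ∈ Finset.range t, (A - B * K) ^ s * S1 * ((A - B * K)ᵀ) ^ s)‖
        ≤ ε) := by
  obtain ⟨hγ0, hγ1⟩ := hγ
  set ρ := max γ (γ * ‖A - B * K‖ ^ 2)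
  have hρ0 : 0 < ρ := hγ0.trans_le (le_max_left _ _)
  have hρ1 : ρ < 1 := max_lt hγ1 hK
  have hC : 0 ≤ C0var := (norm_nonneg _).trans hC0.1
  have htail := norm_tsum_sub_sum_range_discounted_cov_le hγ0.le hρ1 (le_max_left _ _)
    (le_max_right _ _) hC0.1 hC0.2 T
  refine ⟨htail.trans ?_, fun hT => htail.trans (mul_pow_mul_div_le_of_sq_le hρ0 hρ1 hC hε hT)⟩
  calc C0var * (ρ ^ T * (1 + T * (1 - ρ)) / (1 - ρ) ^ 2)
      ≤ C0var * (ρ ^ T * (T + 1) / (1 - ρ) ^ 2) := by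
        gcongr C0var * (ρ ^ T * ?_ / _)
        nlinarith
    _ = ((T : ℝ) + 1) * ρ ^ T * C0var / (1 - ρ) ^ 2 := by ring

/-- truncation error bound. With `M = A - BK`,
`Σ^y_K = ∑_{t≥0} γ^t Cov(y_t)` and `Σ^{y,T}_K = ∑_{t<T} γ^t Cov(y_t)` where
`Cov(y_t) = M^t Σ_{y₀} (Mᵀ)^t + ∑_{s<t} M^s Σ¹ (Mᵀ)^s`, for `T ≥ 2`:
`‖Σ^y_K - Σ^{y,T}_K‖ ≤ (T+1) γ_θ^T C_{0,var}/(1-γ_θ)²` with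
`γ_θ = max{γ, γ‖A-BK‖²} < 1` and `C_{0,var} ≥ max{‖Σ_{y₀}‖, ‖Σ¹‖}`;
consequently, if `T ≥ ((1/log(1/γ_θ))(log((1/ε) C_{0,var}/(1-γ_θ)²)+1))²`
then `‖Σ^y_K - Σ^{y,T}_K‖ ≤ ε`. -/
theorem stmt_13 {d l : ℕ} (γ : ℝ) (hγ : γ ∈ Set.Ioo (0:ℝ) 1)
    (A : Matrix (Fin d) (Fin d) ℝ) (B : Matrix (Fin d) (Fin l) ℝ)
    (K : Matrix (Fin l) (Fin d) ℝ)
    (hK : γ * ‖A - B * K‖ ^ 2 < 1)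
    (Sy0 S1 : Matrix (Fin d) (Fin d) ℝ)
    (hSy0 : Sy0.PosSemidef) (hS1 : S1.PosSemidef)
    (C0var : ℝ) (hC0 : ‖Sy0‖ ≤ C0var ∧ ‖S1‖ ≤ C0var)
    (T : ℕ) (hT : 2 ≤ T)
    (ε : ℝ) (hε : 0 < ε) :
    ‖(∑' t : ℕ, γ ^ t •
          ((A - B * K) ^ t * Sy0 * ((A - B * K)ᵀ) ^ t
            + ∑ s ∈ Finset.range t, (A - B * K) ^ s * S1 * ((A - B * K)ᵀ) ^ s))
        - ∑ t ∈ Finset.range T, γ ^ t •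
          ((A - B * K) ^ t * Sy0 * ((A - B * K)ᵀ) ^ t
            + ∑ s ∈ Finset.range t, (A - B * K) ^ s * S1 * ((A - B * K)ᵀ) ^ s)‖
      ≤ ((T : ℝ) + 1) * max γ (γ * ‖A - B * K‖ ^ 2) ^ T * C0var /
          (1 - max γ (γ * ‖A - B * K‖ ^ 2)) ^ 2
    ∧
    (((1 / Real.log (1 / max γ (γ * ‖A - B * K‖ ^ 2))) *
        (Real.log ((1 / ε) * (C0var / (1 - max γ (γ * ‖A - B * K‖ ^ 2)) ^ 2)) + 1)) ^ 2
        ≤ (T : ℝ) →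
      ‖(∑' t : ℕ, γ ^ t •
            ((A - B * K) ^ t * Sy0 * ((A - B * K)ᵀ) ^ t
              + ∑ s ∈ Finset.range t, (A - B * K) ^ s * S1 * ((A - B * K)ᵀ) ^ s))
          - ∑ t ∈ Finset.range T, γ ^ t •
            ((A - B * K) ^ t * Sy0 * ((A - B * K)ᵀ) ^ t
              + ∑ s ∈ Finset.range t, (A - B * K) ^ s * S1 * ((A - B * K)ᵀ) ^ s)‖
        ≤ ε) :=
  stmt_13_general γ hγ A B K hK Sy0 S1 C0var hC0 T ε hε
end
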